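/- Let G be a finite group, H ≤ G, π ∈ G, and let x, z : G → ℝ≥0 be uniform on H, y the point mass at π. Write t = x * y * z. Then t = Σ_{i=1}^{m} (1/m) zᵢ where m = [H : H ∩ πHπ⁻¹], each zᵢ is the uniform distribution on a distinct left coset λᵢH contained in HπH, and each zᵢ is majorized by z (as vectors over G). -/

import Mathlib

open scoped Pointwise

/-- Convolution of two functions on a finite group. -/
def conv {G : Type*} [Group G] [Fintype G] (a b : G → ℝ) : G → ℝ :=
  fun g => ∑ h, a (g * h⁻¹) * b h

/-- The uniform distribution on a subset of a finite group. -/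
noncomputable def uniformOn {G : Type*} [Group G] [Fintype G] (S : Set G) : G → ℝ :=
  S.indicator fun _ => 1 / (Nat.card S : ℝ)

/-- Majorization for vectors indexed by a finite type: sums agree and each top-k partial
sum of `x` is at most that of `y`. -/
def MajorizedBy {ι : Type*} [Fintype ι] (x y : ι → ℝ) : Prop :=
  (∑ i, x i = ∑ i, y i) ∧
  ∀ s : Finset ι, ∃ t : Finset ι, t.card = s.card ∧ ∑ i ∈ s, x i ≤ ∑ i ∈ t, y i

section Helpers

variable {G : Type*} [Group G] [Fintype G] [DecidableEq G]

open Classical in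
lemma uniformOn_apply (S : Set G) (g : G) :
    uniformOn S g = if g ∈ S then 1 / (Nat.card S : ℝ) else 0 := by
  simp [uniformOn, Set.indicator_apply]

lemma uniformOn_nonneg (S : Set G) (g : G) : 0 ≤ uniformOn S g := by
  rw [uniformOn_apply]
  split
  · positivity
  · exact le_rfl

lemma uniformOn_eq_zero (S : Set G) {g : G} (hg : g ∉ S) : uniformOn S g = 0 := by
  rw [uniformOn_apply, if_neg hg]

lemma toFinset_card_eq_natCard (S : Set G) [Fintype S] :
    S.toFinset.card = Nat.card S := by
  rw [Set.toFinset_card, Nat.card_eq_fintype_card]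

lemma sum_uniformOn_of_subset (S : Set G) [Fintype S] {t : Finset G}
    (h : S.toFinset ⊆ t) :
    ∑ g ∈ t, uniformOn S g = (Nat.card S : ℝ) * (1 / (Nat.card S : ℝ)) := by
  classical
  rw [← Finset.sum_subset h (fun g _ hg => uniformOn_eq_zero S (by simpa using hg))]
  have : ∀ g ∈ S.toFinset, uniformOn S g = 1 / (Nat.card S : ℝ) := by
    intro g hg
    rw [uniformOn_apply, if_pos (by simpa using hg)]
  rw [Finset.sum_congr rfl this, Finset.sum_const, toFinset_card_eq_natCard,
    nsmul_eq_mul]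

lemma sum_uniformOn_univ (S : Set G) [Fintype S] (hS : S.Nonempty) :
    ∑ g, uniformOn S g = 1 := by
  classical
  rw [sum_uniformOn_of_subset S (Finset.subset_univ _)]
  have hne : (Nat.card S : ℝ) ≠ 0 := by
    have : 0 < Nat.card S := @Nat.card_pos _ hS.to_subtype _
    positivity
  rw [mul_one_div, div_self hne]

/-- Majorization of a coset uniform by the subgroup uniform. -/
lemma maj_coset (H : Subgroup G) (a : G) :
    MajorizedBy (uniformOn (a • (H : Set G))) (uniformOn (H : Set G)) := by
  classical
  have hcard : Nat.card ↥(a • (H : Set G)) = Nat.card ↥(H : Set G) :=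
    Set.natCard_smul_set a (H : Set G)
  have hne : (a • (H : Set G)).Nonempty := ⟨a • 1, ⟨1, H.one_mem, rfl⟩⟩
  have hHne : (H : Set G).Nonempty := ⟨1, H.one_mem⟩
  have hnpos : 0 < Nat.card (H : Set G) := @Nat.card_pos _ hHne.to_subtype _
  set n := Nat.card (H : Set G) with hn
  constructor
  · rw [sum_uniformOn_univ _ hne, sum_uniformOn_univ _ hHne]
  · intro s
    by_cases hk : s.card ≤ n
    · -- pick t ⊆ H with card = s.card
      obtain ⟨t, htH, htc⟩ := Finset.exists_subset_card_eq
        (s := (H : Set G).toFinset) (n := s.card)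
        (by rw [toFinset_card_eq_natCard]; exact hk)
      refine ⟨t, htc, ?_⟩
      have h1 : ∑ i ∈ s, uniformOn (a • (H : Set G)) i ≤ s.card • ((1 : ℝ) / n) := by
        apply Finset.sum_le_card_nsmul
        intro g _
        rw [uniformOn_apply]
        split
        · rw [hcard]
        · positivity
      have h2 : ∑ i ∈ t, uniformOn (H : Set G) i = t.card • ((1 : ℝ) / n) := by
        rw [Finset.sum_congr rfl (fun g hg => ?_), Finset.sum_const]
        rw [uniformOn_apply, if_pos (by simpa using htH hg)]
      rw [h2, htc]
      exact h1
    · push_neg at hk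
      obtain ⟨t, htH, htc⟩ := Finset.exists_superset_card_eq
        (s := (H : Set G).toFinset) (n := s.card)
        (by rw [toFinset_card_eq_natCard]; exact hk.le)
        (Finset.card_le_univ s)
      refine ⟨t, htc, ?_⟩
      calc ∑ i ∈ s, uniformOn (a • (H : Set G)) i
          ≤ ∑ i, uniformOn (a • (H : Set G)) i :=
            Finset.sum_le_sum_of_subset_of_nonneg (Finset.subset_univ s)
              (fun g _ _ => uniformOn_nonneg _ g)
        _ = 1 := sum_uniformOn_univ _ hne
        _ = ∑ i ∈ t, uniformOn (H : Set G) i := by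
            rw [sum_uniformOn_of_subset _ htH, mul_one_div, div_self]
            exact Nat.cast_ne_zero.mpr (hn ▸ hnpos).ne'

end Helpers

/-- With `x`, `z` uniform on `H` and `y` the point mass at `π`, the product `t = x * y * z`
decomposes as a convex sum `t = ∑_{i=1}^m (1/m) zᵢ` where `m = [H : H ∩ πHπ⁻¹]`, each `zᵢ`
is uniform on a distinct left coset `λᵢH` contained in `HπH`, and each `zᵢ ⪯ z`. -/
theorem stmt19 {G : Type*} [Group G] [Fintype G] [DecidableEq G] (H : Subgroup G) (π : G)
    (x y z : G → ℝ)
    (hx : x = uniformOn (H : Set G))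
    (hy : y = fun g => if g = π then (1 : ℝ) else 0)
    (hz : z = uniformOn (H : Set G))
    (m : ℕ) (hm : m = Subgroup.relIndex (Subgroup.map (MulAut.conj π).toMonoidHom H) H) :
    ∃ lam : Fin m → G,
      Function.Injective (fun i => (lam i) • (H : Set G)) ∧
      (∀ i, (lam i) • (H : Set G) ⊆ {g : G | ∃ h₁ ∈ H, ∃ h₂ ∈ H, g = h₁ * π * h₂}) ∧
      conv (conv x y) z = (fun g => ∑ i : Fin m, (1 / (m : ℝ)) * uniformOn ((lam i) • (H : Set G)) g) ∧
      (∀ i, MajorizedBy (uniformOn ((lam i) • (H : Set G))) z) := by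
  classical
  subst hx hy hz
  set K : Subgroup G := Subgroup.map (MulAut.conj π).toMonoidHom H with hK
  have hKmem : ∀ g : G, g ∈ K ↔ π⁻¹ * g * π ∈ H := by
    intro g
    constructor
    · rintro ⟨h, hh, rfl⟩
      simpa [MulAut.conj, mul_assoc] using hh
    · intro hg
      exact ⟨π⁻¹ * g * π, hg, by simp [MulAut.conj]; group⟩
  set L : Subgroup H := K.subgroupOf H with hL
  have hmL : m = L.index := hm
  -- basic cardinalities
  set n := Nat.card (H : Set G) with hn
  have hncard : Nat.card (H : Set G) = Nat.card H := Nat.card_congr (Equiv.refl _)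
  have hHne : (H : Set G).Nonempty := ⟨1, H.one_mem⟩
  have hnpos : 0 < n := @Nat.card_pos _ hHne.to_subtype _
  have hmpos : 0 < m := by
    rw [hmL]; exact Nat.pos_of_ne_zero (Subgroup.index_ne_zero_of_finite)
  -- the equiv with Fin m
  have hqcard : Nat.card (H ⧸ L) = m := hmL.symm
  let e : (H ⧸ L) ≃ Fin m := Finite.equivFinOfCardEq hqcard
  set lam : Fin m → G := fun i => ((e.symm i).out : G) * π with hlam
  -- coset equality criterion
  have cosetA : ∀ h₁ h₂ : H, ((h₁ : G) * π) • (H : Set G) = ((h₂ : G) * π) • (H : Set G)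
      ↔ ((h₁ : H ⧸ L) = (h₂ : H ⧸ L)) := by
    intro h₁ h₂
    rw [leftCoset_eq_iff, QuotientGroup.eq]
    have : ((h₁ : G) * π)⁻¹ * ((h₂ : G) * π) = π⁻¹ * ((h₁ : G)⁻¹ * h₂) * π := by group
    rw [this]
    constructor
    · intro hin
      have : ((h₁⁻¹ * h₂ : H) : G) ∈ K := (hKmem _).mpr (by simpa using hin)
      simpa [hL, Subgroup.mem_subgroupOf] using this
    · intro hin
      have : ((h₁⁻¹ * h₂ : H) : G) ∈ K := by
        simpa [hL, Subgroup.mem_subgroupOf] using hin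
      simpa using (hKmem _).mp this
  have hlamcoset : ∀ (h : H) (i : Fin m), e ((h : H ⧸ L)) = i →
      lam i • (H : Set G) = ((h : G) * π) • (H : Set G) := by
    intro h i hi
    have : ((e.symm i).out : H ⧸ L) = (h : H ⧸ L) := by
      rw [QuotientGroup.out_eq', ← hi, Equiv.symm_apply_apply]
    exact (cosetA _ _).mpr this
  have hinj : Function.Injective (fun i => (lam i) • (H : Set G)) := by
    intro i j hij
    have := (cosetA (e.symm i).out (e.symm j).out).mp hij
    rw [QuotientGroup.out_eq', QuotientGroup.out_eq'] at this
    simpa using congrArg e this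
  have hsub : ∀ i, (lam i) • (H : Set G) ⊆ {g : G | ∃ h₁ ∈ H, ∃ h₂ ∈ H, g = h₁ * π * h₂} := by
    intro i g hg
    rw [mem_leftCoset_iff] at hg
    refine ⟨((e.symm i).out : G), (e.symm i).out.2, (lam i)⁻¹ * g, hg, ?_⟩
    simp [hlam]; group
  refine ⟨lam, hinj, hsub, ?_, fun i => maj_coset H (lam i)⟩
  -- the convolution identity
  funext g
  -- first convolution
  have hconv1 : conv (uniformOn (H : Set G)) (fun g => if g = π then (1 : ℝ) else 0)
      = fun g' => uniformOn (H : Set G) (g' * π⁻¹) := by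
    funext g'
    simp only [conv, mul_ite, mul_one, mul_zero]
    rw [Finset.sum_ite_eq' Finset.univ π (fun h => uniformOn (H : Set G) (g' * h⁻¹))]
    simp
  rw [hconv1]
  simp only [conv]
  -- LHS as a count
  have hterm : ∀ h : G, uniformOn (H : Set G) (g * h⁻¹ * π⁻¹) * uniformOn (H : Set G) h
      = if (g * h⁻¹ * π⁻¹ ∈ H ∧ h ∈ H) then (1 / (n : ℝ)) * (1 / n) else 0 := by
    intro h
    rw [uniformOn_apply, uniformOn_apply, ← hn]
    by_cases h1 : g * h⁻¹ * π⁻¹ ∈ H <;> by_cases h2 : h ∈ H <;> simp [h1, h2]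
  have hLHS : ∑ h, uniformOn (H : Set G) (g * h⁻¹ * π⁻¹) * uniformOn (H : Set G) h
      = ((Finset.univ.filter (fun h => g * h⁻¹ * π⁻¹ ∈ H ∧ h ∈ H)).card : ℝ)
        * (1 / n * (1 / n)) := by
    rw [Finset.sum_congr rfl (fun h _ => hterm h), ← Finset.sum_filter,
      Finset.sum_const, nsmul_eq_mul]
  rw [hLHS]
  -- RHS terms
  have hcosetcard : ∀ i, Nat.card ↥((lam i) • (H : Set G)) = n := by
    intro i
    rw [Set.natCard_smul_set, ← hn]
  have hRHSterm : ∀ i, (1 / (m : ℝ)) * uniformOn ((lam i) • (H : Set G)) g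
      = if g ∈ (lam i) • (H : Set G) then 1 / (m : ℝ) * (1 / n) else 0 := by
    intro i
    rw [uniformOn_apply, hcosetcard i]
    split_ifs <;> ring
  rw [Finset.sum_congr rfl (fun i _ => hRHSterm i)]
  by_cases hg : g ∈ {g : G | ∃ h₁ ∈ H, ∃ h₂ ∈ H, g = h₁ * π * h₂}
  · obtain ⟨h₁, hh₁, h₂, hh₂, rfl⟩ := hg
    -- RHS: exactly one coset contains g
    set i₀ : Fin m := e ((⟨h₁, hh₁⟩ : H) : H ⧸ L) with hi₀
    have hgi₀ : (h₁ * π * h₂) ∈ lam i₀ • (H : Set G) := by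
      rw [hlamcoset ⟨h₁, hh₁⟩ i₀ rfl, mem_leftCoset_iff]
      have : ((⟨h₁, hh₁⟩ : H) : G) = h₁ := rfl
      rw [this]
      have : (h₁ * π)⁻¹ * (h₁ * π * h₂) = h₂ := by group
      rw [this]; exact hh₂
    have huniq : ∀ j : Fin m, j ≠ i₀ → (h₁ * π * h₂) ∉ lam j • (H : Set G) := by
      intro j hj hmem
      apply hj
      apply hinj
      have e1 : lam j • (H : Set G) = (h₁ * π * h₂) • (H : Set G) :=
        (leftCoset_eq_iff _).mpr ((mem_leftCoset_iff _).mp hmem)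
      have e2 : lam i₀ • (H : Set G) = (h₁ * π * h₂) • (H : Set G) :=
        (leftCoset_eq_iff _).mpr ((mem_leftCoset_iff _).mp hgi₀)
      simpa using e1.trans e2.symm
    have hRHS : ∑ i : Fin m, (if (h₁ * π * h₂) ∈ (lam i) • (H : Set G)
        then 1 / (m : ℝ) * (1 / n) else 0) = 1 / (m : ℝ) * (1 / n) := by
      rw [Finset.sum_eq_single_of_mem i₀ (Finset.mem_univ i₀)
        (fun j _ hj => if_neg (huniq j hj))]
      rw [if_pos hgi₀]
    rw [hRHS]
    -- LHS count equals Nat.card L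
    have hLcard : Nat.card L * m = n := by
      rw [hmL, hn]
      rw [Subgroup.card_mul_index]
      exact hncard.symm
    have step1 : Finset.univ.filter (fun h => (h₁ * π * h₂) * h⁻¹ * π⁻¹ ∈ H ∧ h ∈ H)
        = Finset.univ.filter (fun h => h * h₂⁻¹ ∈ H ∧ π * (h * h₂⁻¹) * π⁻¹ ∈ H) := by
      apply Finset.filter_congr
      intro h _
      constructor
      · rintro ⟨c1, c2⟩
        refine ⟨H.mul_mem c2 (H.inv_mem hh₂), ?_⟩
        have e1 : π * (h * h₂⁻¹) * π⁻¹ = (h₁⁻¹ * ((h₁ * π * h₂) * h⁻¹ * π⁻¹))⁻¹ := by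
          group
        rw [e1]
        exact H.inv_mem (H.mul_mem (H.inv_mem hh₁) c1)
      · rintro ⟨d1, d2⟩
        constructor
        · have e1 : (h₁ * π * h₂) * h⁻¹ * π⁻¹ = h₁ * (π * (h * h₂⁻¹) * π⁻¹)⁻¹ := by
            group
          rw [e1]
          exact H.mul_mem hh₁ (H.inv_mem d2)
        · have e1 : h = (h * h₂⁻¹) * h₂ := by group
          rw [e1]
          exact H.mul_mem d1 hh₂
    have step2 : (Finset.univ.filter
          (fun h => h * h₂⁻¹ ∈ H ∧ π * (h * h₂⁻¹) * π⁻¹ ∈ H)).card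
        = (Finset.univ.filter (fun a => a ∈ K ∧ a ∈ H)).card := by
      apply Finset.card_bij' (fun h _ => π * (h * h₂⁻¹) * π⁻¹)
        (fun a _ => π⁻¹ * a * π * h₂)
      · intro h hh
        rw [Finset.mem_filter] at hh ⊢
        obtain ⟨-, d1, d2⟩ := hh
        refine ⟨Finset.mem_univ _, (hKmem _).mpr ?_, d2⟩
        have e1 : π⁻¹ * (π * (h * h₂⁻¹) * π⁻¹) * π = h * h₂⁻¹ := by group
        rw [e1]; exact d1
      · intro a ha
        rw [Finset.mem_filter] at ha ⊢
        obtain ⟨-, d1, d2⟩ := ha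
        refine ⟨Finset.mem_univ _, ?_, ?_⟩
        · have e1 : π⁻¹ * a * π * h₂ * h₂⁻¹ = π⁻¹ * a * π := by group
          rw [e1]; exact (hKmem _).mp d1
        · have e1 : π * (π⁻¹ * a * π * h₂ * h₂⁻¹) * π⁻¹ = a := by group
          rw [e1]; exact d2
      · intro h _; group
      · intro a _; group
    have step3 : (Finset.univ.filter (fun a => a ∈ K ∧ a ∈ H)).card = Nat.card L := by
      have e3 : (K ⊓ H).subgroupOf H = L := Subgroup.inf_subgroupOf_right K H
      have e4 : Nat.card L = Nat.card (K ⊓ H : Subgroup G) := by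
        rw [← e3]
        exact Nat.card_congr (Subgroup.subgroupOfEquivOfLe inf_le_right).toEquiv
      rw [e4, Nat.card_eq_fintype_card, Fintype.card_subtype]
      congr 1
      apply Finset.filter_congr
      intro a _
      simp [Subgroup.mem_inf, and_comm]
    rw [step1, step2, step3]
    have hc : ((Nat.card L : ℝ)) * m = n := by exact_mod_cast congrArg Nat.cast hLcard
    have hm0 : (m : ℝ) ≠ 0 := Nat.cast_ne_zero.mpr hmpos.ne'
    have hn0 : (n : ℝ) ≠ 0 := Nat.cast_ne_zero.mpr hnpos.ne'
    field_simp
    simp only [Nat.card_eq_fintype_card] at hc ⊢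
    linear_combination hc
  · -- g outside HπH : both sides vanish
    have hfilt : Finset.univ.filter (fun h => g * h⁻¹ * π⁻¹ ∈ H ∧ h ∈ H) = ∅ := by
      rw [Finset.filter_eq_empty_iff]
      rintro h - ⟨c1, c2⟩
      exact hg ⟨g * h⁻¹ * π⁻¹, c1, h, c2, by group⟩
    rw [hfilt]
    rw [Finset.sum_congr rfl (fun i _ => if_neg (fun hmem => hg (hsub i hmem)))]
    simp
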